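/- arXiv:1410.8329 — 2 statements merged into one kernel-verified Lean document; each statement's English description precedes it below -/
import Mathlib

section
/- Let (i,j) be an outer corner of a valid set of pairs D (i.e. (i,j) ∉ D and D ∪ {(i,j)} is a valid set of pairs), and let μ be a finitely supported integer sequence with μ_i > k ≥ μ_j. Let ρ := r·ε_j for some integer r ≤ 1, and set γ := γ(D, μ+ρ). Then in ℤ[c,t]: T(D, μ+ρ) = T(D∪{(i,j)}, μ+ρ) + T(D∪{(i,j)}, μ+R_{ij}ρ) + (t_{γ_i − 1} − t_{γ_j}) · R^{D∪{(i,j)}} c^{γ}_{μ+ρ−ε_j}, where t_m := t_{-m} for m < 0. In particular, if μ_i + μ_j + ρ_j = 2k + 1 + a_j(D), then T(D, μ+ρ) = T(D∪{(i,j)}, μ+ρ) + T(D∪{(i,j)}, μ+R_{ij}ρ). -/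
open scoped Classical

noncomputable section

/-- The polynomial ring ℤ[c,t]: variables `Sum.inl p` (p ≥ 1) are the `c` variables,
variables `Sum.inr i` (i ≥ 1) are the `t` variables. -/
abbrev P : Type := MvPolynomial (ℕ ⊕ ℕ) ℤ

/-- t_r, with the convention t_r = t_{-r} for r < 0. -/
def tvar (r : ℤ) : P := MvPolynomial.X (Sum.inr r.natAbs)

/-- c_p, with c_0 = 1 and c_p = 0 for p < 0. -/
def cvar (p : ℤ) : P :=
  if p = 0 then 1 else if p < 0 then 0 else MvPolynomial.X (Sum.inl p.toNat)

def negT (i : ℕ) : P := - MvPolynomial.X (Sum.inr i)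

/-- e_j(-t_1,…,-t_m). -/
def esymNT (m j : ℕ) : P :=
  ∑ S ∈ Finset.powersetCard j (Finset.Icc 1 m), ∏ i ∈ S, negT i

/-- h_j(-t_1,…,-t_m). -/
def hsymNT (m j : ℕ) : P :=
  ∑ f ∈ (Finset.Icc 1 m).sym j, (Multiset.map negT (f : Multiset ℕ)).prod

/-- h^r_j(-t): complete homogeneous for r ≥ 0, elementary in |r| variables for r < 0,
and 0 for j < 0. -/
def hNT (r j : ℤ) : P :=
  if j < 0 then 0
  else if 0 ≤ r then hsymNT r.toNat j.toNat
  else esymNT (-r).toNat j.toNat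

/-- c^r_p = Σ_{j=0}^p c_{p-j} h^r_j(-t). -/
def cc (r p : ℤ) : P :=
  ∑ j ∈ Finset.range (p.toNat + 1), cvar (p - j) * hNT r j

/-- c^β_α = Π_i c^{β_i}_{α_i} (sequences are indexed from 1; entry 0 is inert since c^r_0 = 1). -/
def cmon (β α : ℕ → ℤ) : P := ∏ᶠ i, cc (β i) (α i)

/-- The sequence obtained from α by the raising-operator monomial Π_{(i,j)} R_{ij}^{n(i,j)}. -/
def raiseSeq (n : (ℕ × ℕ) →₀ ℕ) (α : ℕ → ℤ) : ℕ → ℤ := fun m =>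
  α m + ∑ p ∈ n.support, (n p : ℤ) * ((if p.1 = m then 1 else 0) - (if p.2 = m then 1 else 0))

/-- Coefficient of R^m in the factor attached to one pair: (1-R) if `a` only,
(1+R)⁻¹ if `b` only, (1-R)(1+R)⁻¹ if both, 1 if neither (only evaluated at m ≥ 1). -/
def pairCoeff (a b : Prop) (m : ℕ) : ℤ :=
  if a then (if b then 2 * (-1 : ℤ)^m else if m ≤ 1 then (-1 : ℤ)^m else 0)
  else (if b then (-1 : ℤ)^m else 0)

def roCoeff (A B : Set (ℕ × ℕ)) (n : (ℕ × ℕ) →₀ ℕ) : ℤ :=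
  ∏ p ∈ n.support, pairCoeff (p ∈ A) (p ∈ B) (n p)

/-- Apply the raising operator expression Π_{p∈A}(1-R_p) · Π_{p∈B}(1+R_p)⁻¹ to c^β_α. -/
def applyRO (A B : Set (ℕ × ℕ)) (β α : ℕ → ℤ) : P :=
  ∑ᶠ n : (ℕ × ℕ) →₀ ℕ, (roCoeff A B n) • cmon β (raiseSeq n α)

/-- The set Δ° of all pairs (i,j) with 1 ≤ i < j. -/
def Upper : Set (ℕ × ℕ) := {p | 1 ≤ p.1 ∧ p.1 < p.2}

/-- A valid set of pairs: a finite order ideal of Δ°. -/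
def ValidPairs (D : Set (ℕ × ℕ)) : Prop :=
  D ⊆ Upper ∧ D.Finite ∧
    ∀ p ∈ D, ∀ q ∈ Upper, q.1 ≤ p.1 → q.2 ≤ p.2 → q ∈ D

/-- a_j(D) = #{i < j : (i,j) ∉ D}. -/
def aD (D : Set (ℕ × ℕ)) (j : ℕ) : ℕ :=
  ((Finset.Ico 1 j).filter (fun i => (i, j) ∉ D)).card

/-- γ_j(D,μ) = k + 1 - μ_j + a_j(D). -/
def gammaSeq (k : ℕ) (D : Set (ℕ × ℕ)) (μ : ℕ → ℤ) (j : ℕ) : ℤ :=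
  (k : ℤ) + 1 - μ j + aD D j

/-- T(D,μ) = R^D c^{γ(D,μ)}_μ, where R^D = Π_{i<j}(1-R_{ij}) Π_{(i,j)∈D}(1+R_{ij})⁻¹. -/
def Tpol (k : ℕ) (D : Set (ℕ × ℕ)) (μ : ℕ → ℤ) : P :=
  applyRO Upper D (gammaSeq k D μ) μ

def FinSupp (α : ℕ → ℤ) : Prop := ∃ N, ∀ m, N ≤ m → α m = 0

/-- Partitions, as integer sequences indexed from 1 (entry 0 is 0). -/
def IsPartition (lam : ℕ → ℤ) : Prop :=
  lam 0 = 0 ∧ (∀ i, 1 ≤ i → 0 ≤ lam i) ∧ (∀ i, 1 ≤ i → lam (i+1) ≤ lam i) ∧ FinSupp lam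

/-- k-strict partitions: parts greater than k are distinct. -/
def IsKStrict (k : ℕ) (lam : ℕ → ℤ) : Prop :=
  IsPartition lam ∧ ∀ i, 1 ≤ i → (k : ℤ) < lam i → lam (i+1) < lam i

/-- C(λ) = {(i,j) : 1 ≤ i < j, λ_i + λ_j > 2k + j - i}. -/
def Cset (k : ℕ) (lam : ℕ → ℤ) : Set (ℕ × ℕ) :=
  {p | 1 ≤ p.1 ∧ p.1 < p.2 ∧ 2*(k:ℤ) + (p.2:ℤ) - (p.1:ℤ) < lam p.1 + lam p.2}

/-- β_j(λ) = k + 1 - λ_j + #{i < j : (i,j) ∉ C(λ)}. -/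
def betaSeq (k : ℕ) (lam : ℕ → ℤ) (j : ℕ) : ℤ :=
  (k : ℤ) + 1 - lam j + ((Finset.Ico 1 j).filter (fun i => (i, j) ∉ Cset k lam)).card

/-- The double theta polynomial Θ_λ(c|t) = R^λ c^{β(λ)}_λ. -/
def Theta (k : ℕ) (lam : ℕ → ℤ) : P :=
  applyRO Upper (Cset k lam) (betaSeq k lam) lam

def zeroSeq : ℕ → ℤ := fun _ => 0

/-- The single theta polynomial Θ_λ(c) = R^λ c_λ. -/
def ThetaSingle (k : ℕ) (lam : ℕ → ℤ) : P :=
  applyRO Upper (Cset k lam) zeroSeq lam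

/-- The ideal generated by I^{(k)} in ℤ[c,t]. -/
def Ik (k : ℕ) : Ideal P :=
  Ideal.span {x | ∃ p : ℕ, k < p ∧
    x = cvar (p:ℤ) * cvar (p:ℤ)
      + 2 * ∑ i ∈ Finset.Icc 1 p, (-1 : P)^i * (cvar ((p : ℤ) + i) * cvar ((p : ℤ) - i))}

/-- ℤ[t] = polynomials in t₁, t₂, …; variable n stands for t_{n+1}. -/
abbrev Zt : Type := MvPolynomial ℕ ℤ

/-- The embedding ℤ[t] → ℤ[c,t]. -/
def tEmbed : Zt →+* P :=
  (MvPolynomial.aeval (fun n : ℕ => (MvPolynomial.X (Sum.inr (n+1)) : P))).toRingHom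

/-- α ↦ α + r·ε_j. -/
def addAt (α : ℕ → ℤ) (j : ℕ) (r : ℤ) : ℕ → ℤ := fun m => α m + if m = j then r else 0

def epsSeq (j : ℕ) : ℕ → ℤ := fun m => if m = j then 1 else 0

/-- The sequence (λ_1,…,λ_{j-1}, r, s, μ_{j+2},…) with prescribed entries r, s at j, j+1. -/
def twoSet (ν : ℕ → ℤ) (j : ℕ) (r s : ℤ) : ℕ → ℤ :=
  fun m => if m = j then r else if m = j+1 then s else ν m

/-- Pairs (i,j) with 1 ≤ i < j ≤ ℓ. -/
def BddPairs (ℓ : ℕ) : Set (ℕ × ℕ) := {p | 1 ≤ p.1 ∧ p.1 < p.2 ∧ p.2 ≤ ℓ}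

/-- Boxes [r,c] and [r',c'] are k-related: |c-k-1| + r = |c'-k-1| + r'. -/
def kRel (k : ℕ) (r c r' c' : ℤ) : Prop :=
  |c - (k:ℤ) - 1| + r = |c' - (k:ℤ) - 1| + r'

/-- Case (i) of λ → μ: μ is obtained from λ by adding a single box (in some row h). -/
def ArrowBox (lam μ : ℕ → ℤ) : Prop :=
  ∃ h : ℕ, 1 ≤ h ∧ ∀ m, μ m = lam m + if m = h then 1 else 0

/-- Case (ii) of λ → μ: remove r boxes from a column c ≤ k of λ (giving ν) and add r+1
boxes to a single row h of ν, so that the removed boxes and the bottom box of μ in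
column c are each k-related to one of the added boxes. -/
def ArrowMove (k : ℕ) (lam μ : ℕ → ℤ) : Prop :=
  ∃ c h r : ℕ, 1 ≤ c ∧ c ≤ k ∧ 1 ≤ h ∧ 1 ≤ r ∧
    ∃ ν : ℕ → ℤ, IsPartition ν ∧
      ∃ S : Finset ℕ, S.card = r ∧
        (∀ x ∈ S, 1 ≤ x ∧ lam x = (c:ℤ) ∧ ν x = (c:ℤ) - 1) ∧
        (∀ x, x ∉ S → ν x = lam x) ∧
        (∀ m, μ m = ν m + if m = h then (r:ℤ) + 1 else 0) ∧
        (∀ x ∈ S, ∃ y : ℤ, ν h + 1 ≤ y ∧ y ≤ ν h + r + 1 ∧ kRel k x c h y) ∧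
        (∀ b : ℕ, 1 ≤ b → (c:ℤ) ≤ μ b → μ (b+1) < (c:ℤ) →
          ∃ y : ℤ, ν h + 1 ≤ y ∧ y ≤ ν h + r + 1 ∧ kRel k b c h y)

/-- λ → μ for k-strict partitions. -/
def ChevArrow (k : ℕ) (lam μ : ℕ → ℤ) : Prop :=
  IsKStrict k μ ∧ (ArrowBox lam μ ∨ ArrowMove k lam μ)

/-- The Chevalley coefficient e_{λμ}: 2 iff μ ⊃ λ with added box neither in column k+1
nor k-related to a bottom box in one of the first k columns of λ; 1 otherwise. -/
def eCoeff (k : ℕ) (lam μ : ℕ → ℤ) : ℤ :=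
  if ∃ h : ℕ, 1 ≤ h ∧ (∀ m, μ m = lam m + if m = h then 1 else 0) ∧
      lam h + 1 ≠ (k:ℤ) + 1 ∧
      ¬ ∃ c x : ℕ, 1 ≤ c ∧ c ≤ k ∧ 1 ≤ x ∧ (c:ℤ) ≤ lam x ∧ lam (x+1) < (c:ℤ) ∧
          kRel k x c h (lam h + 1)
  then 2 else 1

/-- Correspondence between k-strict partitions contained in the (n-k)×(n+k) rectangle and
k-Grassmannian elements of W_n (one-line notation w : ℕ → ℤ on indices 1..n). -/
def GrassCorrespond (k n : ℕ) (w : ℕ → ℤ) (lam : ℕ → ℤ) : Prop :=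
  (∀ m, 1 ≤ m → m ≤ n → 1 ≤ (w m).natAbs ∧ (w m).natAbs ≤ n) ∧
  (∀ m m', 1 ≤ m → m ≤ n → 1 ≤ m' → m' ≤ n → (w m).natAbs = (w m').natAbs → m = m') ∧
  (∀ m, 1 ≤ m → m ≤ k → 0 < w m) ∧
  (∀ m, 1 ≤ m → m + 1 ≤ k → w m < w (m+1)) ∧
  (∀ m, k + 1 ≤ m → m + 1 ≤ n → w m < w (m+1)) ∧
  (∀ i, 1 ≤ i → k + i ≤ n →
    (w (k+i) < 0 → lam i = (k:ℤ) + ((w (k+i)).natAbs : ℤ)) ∧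
    (0 < w (k+i) → lam i = (((Finset.Icc 1 k).filter (fun p => w (k+i) < w p)).card : ℤ))) ∧
  (∀ i, n - k < i → lam i = 0)

/-- The simple reflection s_i acting on the values ±1, …, ±n of signed permutations. -/
def sRefl (i : ℕ) (x : ℤ) : ℤ :=
  if i = 0 then (if x = 1 then -1 else if x = -1 then 1 else x)
  else if x = (i:ℤ) then (i:ℤ)+1
  else if x = (i:ℤ)+1 then (i:ℤ)
  else if x = -(i:ℤ) then -((i:ℤ)+1)
  else if x = -((i:ℤ)+1) then -(i:ℤ)
  else x

/-- Images of the variables under the automorphism s_i of ℤ[c,t]. -/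
def sImage (i : ℕ) : (ℕ ⊕ ℕ) → P
  | Sum.inl p =>
      if i = 0 then
        (if p = 0 then MvPolynomial.X (Sum.inl 0) else
          cvar (p:ℤ) + 2 * ∑ j ∈ Finset.Icc 1 p, (negT 1)^j * cvar ((p:ℤ) - (j:ℤ)))
      else MvPolynomial.X (Sum.inl p)
  | Sum.inr m =>
      if i = 0 then (if m = 1 then negT 1 else MvPolynomial.X (Sum.inr m))
      else if m = i then MvPolynomial.X (Sum.inr (i+1))
      else if m = i+1 then MvPolynomial.X (Sum.inr i)
      else MvPolynomial.X (Sum.inr m)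

/-- The ring endomorphism s_i of ℤ[c,t]. -/
def sAut (i : ℕ) : P →+* P := (MvPolynomial.aeval (sImage i)).toRingHom

/-- Denominator of the divided difference ∂_i: 2t₁ for i = 0, t_{i+1} - t_i for i ≥ 1. -/
def dden (i : ℕ) : P :=
  if i = 0 then 2 * MvPolynomial.X (Sum.inr 1)
  else MvPolynomial.X (Sum.inr (i+1)) - MvPolynomial.X (Sum.inr i)

/-- The divided difference operator ∂_i: the (unique, since P is a domain) quotient
(f - s_i f)/(denominator) whenever the division is exact. -/
def ddiff (i : ℕ) (f : P) : P :=
  if h : ∃ g : P, f - sAut i f = dden i * g then h.choose else 0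

/-!
Write `D' = D ∪ {(i, j)}` and `ν = μ + ρ`. Since `R^D = R^{D'} (1 + R_{ij})`,
`T(D, ν) = R^{D'} c^γ_ν + R^{D'} c^γ_{R_{ij} ν}` with `γ = γ(D, ν)`. The superscripts `γ(D', ν)`
differ from `γ` only by `-1` at `j` (as `a_j(D') = a_j(D) - 1`), and `γ(D', R_{ij} ν)` only by
`-1` at `i`. At an outer corner `a_i(D) = 0`, so the hypotheses give `γ_i ≤ 0` and `γ_j ≥ 1`;
there the recursions `c^{s-1}_p = c^s_p + t_s c^s_{p-1}` (`s ≥ 1`, from `h^s(-t)`) and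
`c^{s-1}_p = c^s_p - t_{s-1} c^s_{p-1}` (`s ≤ 0`, from `e^{-s}(-t)`) account for the lowered
superscript, each at the cost of a multiple of `R^{D'} c^γ_{ν - ε_j}`. When `γ_i - 1 = -γ_j`
the two multiples cancel, because `t_{-m} = t_m`.
-/

open Finset

lemma esymNT_zero (m : ℕ) : esymNT m 0 = 1 := by simp [esymNT]

lemma hsymNT_zero (m : ℕ) : hsymNT m 0 = 1 := by
  rw [hsymNT, sym_zero, sum_singleton]
  rfl

lemma hsymNT_zero_left (j : ℕ) : hsymNT 0 j = esymNT 0 j := by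
  cases j with
  | zero => rw [hsymNT_zero, esymNT_zero]
  | succ j => simp [hsymNT, esymNT, powersetCard_eq_empty.2 (card_empty.trans_lt j.succ_pos)]

lemma esymNT_succ_succ (m j : ℕ) :
    esymNT (m + 1) (j + 1) = esymNT m (j + 1) + negT (m + 1) * esymNT m j := by
  have hIcc : Icc 1 (m + 1) = insert (m + 1) (Icc 1 m) := by
    ext a; simp only [mem_Icc, mem_insert]; omega
  have hnotMem : m + 1 ∉ Icc 1 m := by simp
  have hinsert_inj : Set.InjOn (insert (m + 1)) (powersetCard j (Icc 1 m) : Set (Finset ℕ)) :=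
    fun S hS T hT hST => by
      rw [← erase_insert fun h => hnotMem ((mem_powersetCard.1 hS).1 h), hST,
        erase_insert fun h => hnotMem ((mem_powersetCard.1 hT).1 h)]
  rw [esymNT, hIcc, powersetCard_succ_insert hnotMem, sum_union, sum_image hinsert_inj, esymNT,
    esymNT, mul_sum]
  · refine congrArg _ (sum_congr rfl fun S hS => ?_)
    rw [prod_insert fun h => hnotMem ((mem_powersetCard.1 hS).1 h)]
  · refine disjoint_right.2 fun S hS hS' => ?_
    obtain ⟨T, -, rfl⟩ := mem_image.1 hS
    exact hnotMem ((mem_powersetCard.1 hS').1 (mem_insert_self _ _))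

lemma hsymNT_succ_succ (m j : ℕ) :
    hsymNT (m + 1) (j + 1) = hsymNT m (j + 1) + negT (m + 1) * hsymNT (m + 1) j := by
  unfold hsymNT
  set s := (Icc 1 (m + 1)).sym (j + 1)
  have hfree : s.filter (fun f => m + 1 ∉ f) = (Icc 1 m).sym (j + 1) := by
    ext f
    simp only [s, mem_filter, mem_sym_iff, mem_Icc]
    refine ⟨fun ⟨h, hm⟩ a ha => ?_, fun h => ⟨fun a ha => ?_, fun hm => ?_⟩⟩
    · have : a ≠ m + 1 := fun he => hm (he ▸ ha)
      have := h a ha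
      omega
    · have := h a ha; omega
    · have := h _ hm; omega
  rw [← sum_filter_not_add_sum_filter s (fun f => m + 1 ∈ f), hfree, mul_sum]
  congr 1
  -- multisets containing `m + 1` are `m + 1` consed onto a multiset of size `j`
  refine sum_bij' (fun f hf => f.erase (m + 1) (mem_filter.1 hf).2)
    (fun g _ => Sym.cons (m + 1) g) (fun f hf => ?_) (fun g hg => ?_)
    (fun f hf => Sym.cons_erase (mem_filter.1 hf).2) (fun g _ => Sym.erase_cons_head g (m + 1))
    (fun f hf => ?_)
  · refine mem_sym_iff.2 fun a ha => mem_sym_iff.1 (mem_filter.1 hf).1 a ?_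
    exact Sym.mem_coe.1 (Multiset.mem_of_mem_erase (by rwa [← Sym.coe_erase, Sym.mem_coe]))
  · refine mem_filter.2 ⟨mem_sym_iff.2 fun a ha => ?_, Sym.mem_cons_self _ _⟩
    rcases Sym.mem_cons.1 ha with rfl | h
    · simp
    · exact mem_sym_iff.1 hg a h
  · conv_lhs => rw [← Sym.cons_erase (mem_filter.1 hf).2]
    rw [Sym.coe_cons, Multiset.map_cons, Multiset.prod_cons]

lemma hNT_zero (r : ℤ) : hNT r 0 = 1 := by
  simp [hNT, hsymNT_zero, esymNT_zero]

lemma hNT_of_neg (r : ℤ) {j : ℤ} (hj : j < 0) : hNT r j = 0 := by simp [hNT, hj]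

lemma hNT_of_nonneg {r : ℤ} (hr : 0 ≤ r) {j : ℤ} (hj : 0 ≤ j) :
    hNT r j = hsymNT r.toNat j.toNat := by
  simp [hNT, hr, hj.not_gt]

lemma hNT_of_nonpos {r : ℤ} (hr : r ≤ 0) {j : ℤ} (hj : 0 ≤ j) :
    hNT r j = esymNT (-r).toNat j.toNat := by
  rcases hr.lt_or_eq with hr | rfl
  · simp [hNT, hr, hj.not_gt]
  · simp [hNT, hj.not_gt, hsymNT_zero_left]

lemma hNT_sub_one_of_pos {r : ℤ} (hr : 1 ≤ r) (j : ℤ) :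
    hNT (r - 1) j = hNT r j + tvar r * hNT r (j - 1) := by
  rcases lt_trichotomy j 0 with hj | rfl | hj
  · simp [hNT_of_neg _ hj, hNT_of_neg _ (show j - 1 < 0 by omega)]
  · simp [hNT_zero, hNT_of_neg _ (show (-1 : ℤ) < 0 by omega)]
  · have htvar : tvar r = -negT ((r - 1).toNat + 1) := by
      simp only [tvar, negT, neg_neg]; congr 2; omega
    rw [hNT_of_nonneg (by omega) hj.le, hNT_of_nonneg (by omega) hj.le,
      hNT_of_nonneg (by omega) (by omega),
      show r.toNat = (r - 1).toNat + 1 by omega, show j.toNat = (j - 1).toNat + 1 by omega,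
      hsymNT_succ_succ, htvar]
    ring

lemma hNT_sub_one_of_nonpos {r : ℤ} (hr : r ≤ 0) (j : ℤ) :
    hNT (r - 1) j = hNT r j - tvar (r - 1) * hNT r (j - 1) := by
  rcases lt_trichotomy j 0 with hj | rfl | hj
  · simp [hNT_of_neg _ hj, hNT_of_neg _ (show j - 1 < 0 by omega)]
  · simp [hNT_zero, hNT_of_neg _ (show (-1 : ℤ) < 0 by omega)]
  · have htvar : tvar (r - 1) = -negT ((-r).toNat + 1) := by
      simp only [tvar, negT, neg_neg]; congr 2; omega
    rw [hNT_of_nonpos hr hj.le, hNT_of_nonpos hr (by omega), hNT_of_nonpos (by omega) hj.le,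
      show (-(r - 1)).toNat = (-r).toNat + 1 by omega, show j.toNat = (j - 1).toNat + 1 by omega,
      esymNT_succ_succ, htvar]
    ring

lemma cc_zero (r : ℤ) : cc r 0 = 1 := by simp [cc, hNT_zero, cvar]

lemma cc_of_neg (r : ℤ) {p : ℤ} (hp : p < 0) : cc r p = 0 := by
  simp [cc, Int.toNat_of_nonpos hp.le, cvar, hp.ne, hp]

lemma cc_sub_one_of_hNT {r : ℤ} (x : P) (hrec : ∀ j, hNT (r - 1) j = hNT r j + x * hNT r (j - 1))
    (p : ℤ) : cc (r - 1) p = cc r p + x * cc r (p - 1) := by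
  rcases lt_trichotomy p 0 with hp | rfl | hp
  · simp [cc_of_neg _ hp, cc_of_neg _ (show p - 1 < 0 by omega)]
  · simp [cc_zero, cc_of_neg _ (show (-1 : ℤ) < 0 by omega)]
  simp only [cc, hrec, mul_add, sum_add_distrib, mul_sum]
  congr 1
  rw [show p.toNat + 1 = (p - 1).toNat + 1 + 1 by omega, sum_range_succ']
  simp only [Nat.cast_zero, zero_sub, hNT_of_neg _ (show (-1 : ℤ) < 0 by omega), mul_zero,
    add_zero]
  refine sum_congr rfl fun q _ => ?_
  push_cast
  ring_nf

lemma cc_sub_one_of_pos {r : ℤ} (hr : 1 ≤ r) (p : ℤ) :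
    cc (r - 1) p = cc r p + tvar r * cc r (p - 1) :=
  cc_sub_one_of_hNT _ (hNT_sub_one_of_pos hr) p

lemma cc_sub_one_of_nonpos {r : ℤ} (hr : r ≤ 0) (p : ℤ) :
    cc (r - 1) p = cc r p + -tvar (r - 1) * cc r (p - 1) :=
  cc_sub_one_of_hNT _ (fun j => by rw [hNT_sub_one_of_nonpos hr]; ring) p

lemma FinSupp.addAt {α : ℕ → ℤ} (hα : FinSupp α) (j : ℕ) (r : ℤ) : FinSupp (addAt α j r) := by
  obtain ⟨N, hN⟩ := hα
  refine ⟨max N (j + 1), fun m hm => ?_⟩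
  simp only [_root_.addAt, hN m (by omega), if_neg (show m ≠ j by omega), add_zero]

lemma hasFiniteMulSupport_cc (β : ℕ → ℤ) {α : ℕ → ℤ} (hα : FinSupp α) :
    Function.HasFiniteMulSupport fun i => cc (β i) (α i) := by
  obtain ⟨N, hN⟩ := hα
  refine (Set.finite_Iio N).subset fun m hm => ?_
  by_contra hmN
  exact hm (by simp only [hN m (not_lt.1 hmN), cc_zero])

lemma cmon_eq_cc_mul (β : ℕ → ℤ) {α : ℕ → ℤ} (hα : FinSupp α) (m : ℕ) :
    cmon β α = cc (β m) (α m) * ∏ᶠ (i) (_ : i ≠ m), cc (β i) (α i) :=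
  (mul_finprod_cond_ne m (hasFiniteMulSupport_cc β hα)).symm

lemma cmon_eq_zero_of_neg (β : ℕ → ℤ) {α : ℕ → ℤ} (hα : FinSupp α) {m : ℕ} (hm : α m < 0) :
    cmon β α = 0 := by
  rw [cmon_eq_cc_mul β hα m, cc_of_neg _ hm, zero_mul]

lemma cmon_update_sub_one (β : ℕ → ℤ) (m : ℕ) (x : P) {α : ℕ → ℤ} (hα : FinSupp α)
    (hx : cc (β m - 1) (α m) = cc (β m) (α m) + x * cc (β m) (α m - 1)) :
    cmon (Function.update β m (β m - 1)) α = cmon β α + x * cmon β (addAt α m (-1)) := by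
  have hothers : ∀ i ≠ m, cc (Function.update β m (β m - 1) i) (α i) = cc (β i) (α i) ∧
      cc (β i) (addAt α m (-1) i) = cc (β i) (α i) := fun i hi => by
    simp [addAt, hi]
  rw [cmon_eq_cc_mul _ hα m, cmon_eq_cc_mul β hα m, cmon_eq_cc_mul β (hα.addAt m (-1)) m,
    finprod_congr fun i => finprod_congr fun hi => (hothers i hi).1,
    finprod_congr fun i => finprod_congr fun hi => (hothers i hi).2]
  simp only [Function.update_self, addAt, if_true, hx, ← sub_eq_add_neg]
  ring

lemma raiseSeq_eq_add_sum (n : (ℕ × ℕ) →₀ ℕ) (α : ℕ → ℤ) (m : ℕ) :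
    raiseSeq n α m = α m + n.sum fun p c =>
      (c : ℤ) * ((if p.1 = m then 1 else 0) - (if p.2 = m then 1 else 0)) :=
  rfl

lemma raiseSeq_add (n n' : (ℕ × ℕ) →₀ ℕ) (α : ℕ → ℤ) :
    raiseSeq (n + n') α = raiseSeq n (raiseSeq n' α) := by
  funext m
  simp only [raiseSeq_eq_add_sum]
  rw [Finsupp.sum_add_index' (fun _ => by simp) fun _ _ _ => by push_cast; ring]
  ring

lemma raiseSeq_single_one (i j : ℕ) (α : ℕ → ℤ) :
    raiseSeq (Finsupp.single (i, j) 1) α = addAt (addAt α i 1) j (-1) := by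
  funext m
  rw [raiseSeq_eq_add_sum, Finsupp.sum_single_index (by simp)]
  simp only [addAt, eq_comm (a := m)]
  split_ifs <;> ring

lemma raiseSeq_addAt (n : (ℕ × ℕ) →₀ ℕ) (α : ℕ → ℤ) (m : ℕ) (c : ℤ) :
    raiseSeq n (addAt α m c) = addAt (raiseSeq n α) m c := by
  funext i
  simp only [raiseSeq_eq_add_sum, addAt]
  ring

lemma FinSupp.raiseSeq {α : ℕ → ℤ} (hα : FinSupp α) (n : (ℕ × ℕ) →₀ ℕ) :
    FinSupp (raiseSeq n α) := by
  obtain ⟨N, hN⟩ := hα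
  refine ⟨max N (n.support.sup (fun p => max p.1 p.2) + 1), fun m hm => ?_⟩
  rw [raiseSeq_eq_add_sum, hN m (by omega), zero_add]
  refine sum_eq_zero fun p hp => ?_
  have := le_sup (f := fun p : ℕ × ℕ => max p.1 p.2) hp
  dsimp only
  rw [if_neg (by omega), if_neg (by omega), sub_zero, mul_zero]

lemma mem_upper_of_roCoeff_ne_zero {B : Set (ℕ × ℕ)} (hB : B ⊆ Upper) {n : (ℕ × ℕ) →₀ ℕ}
    (h : roCoeff Upper B n ≠ 0) {p : ℕ × ℕ} (hp : p ∈ n.support) : p ∈ Upper := by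
  by_contra hpU
  have hpB : p ∉ B := fun hpB => hpU (hB hpB)
  exact h (prod_eq_zero hp (by simp [pairCoeff, hpU, hpB]))

lemma sum_mul_sub_raiseSeq (n : (ℕ × ℕ) →₀ ℕ) (α : ℕ → ℤ) (w : ℕ → ℤ) {N : ℕ}
    (hN : ∀ p ∈ n.support, p.1 < N ∧ p.2 < N) :
    ∑ m ∈ range N, w m * (α m - raiseSeq n α m) = n.sum fun p c => (c : ℤ) * (w p.2 - w p.1) := by
  simp only [raiseSeq_eq_add_sum, sub_add_cancel_left, Finsupp.sum, mul_neg, sum_neg_distrib,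
    mul_sum]
  rw [sum_comm, ← sum_neg_distrib]
  refine sum_congr rfl fun p hp => ?_
  simp only [mul_sub, mul_ite, mul_one, mul_zero, sum_sub_distrib, sum_ite_eq, mem_range,
    (hN p hp).1, (hN p hp).2, if_true]
  ring

/-- Weighting position `m` by `m²`, a raising step at `p` lowers `∑ m² α_m` by at least `p.2`,
so a raised sequence that stays nonnegative bounds both exponents and positions. -/
lemma apply_le_and_snd_le_of_raiseSeq_nonneg {n : (ℕ × ℕ) →₀ ℕ} {α : ℕ → ℤ} {N : ℕ}
    (hα : ∀ m, N ≤ m → α m = 0) (hU : ∀ p ∈ n.support, p ∈ Upper)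
    (hpos : ∀ m, 0 ≤ raiseSeq n α m) {p : ℕ × ℕ} (hp : p ∈ n.support) :
    (n p : ℤ) ≤ ∑ m ∈ range N, (m : ℤ) ^ 2 * α m ∧
      (p.2 : ℤ) ≤ ∑ m ∈ range N, (m : ℤ) ^ 2 * α m := by
  set M := max N (n.support.sup Prod.snd + 1)
  have hM : ∀ q ∈ n.support, q.1 < M ∧ q.2 < M := fun q hq => by
    have := le_sup (f := Prod.snd) hq
    have := (hU q hq).2
    omega
  have hweight := sum_mul_sub_raiseSeq n α (fun m => (m : ℤ) ^ 2) hM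
  have hdrop : ∑ m ∈ range M, (m : ℤ) ^ 2 * (α m - raiseSeq n α m)
      ≤ ∑ m ∈ range N, (m : ℤ) ^ 2 * α m := by
    rw [sum_subset (f := fun m : ℕ => (m : ℤ) ^ 2 * α m) (range_subset_range.2 (le_max_left N _))
      fun m _ hm => by simp [hα m (by simpa using hm)]]
    exact sum_le_sum fun m _ => by nlinarith [hpos m, sq_nonneg (m : ℤ)]
  have hterm : (n p : ℤ) * ((p.2 : ℤ) ^ 2 - (p.1 : ℤ) ^ 2)
      ≤ n.sum fun q c => (c : ℤ) * ((q.2 : ℤ) ^ 2 - (q.1 : ℤ) ^ 2) :=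
    single_le_sum (f := fun q => (n q : ℤ) * ((q.2 : ℤ) ^ 2 - (q.1 : ℤ) ^ 2))
      (fun q hq => mul_nonneg (by positivity) (by nlinarith [(hU q hq).2])) hp
  have hnp : (1 : ℤ) ≤ n p := by
    exact_mod_cast Nat.one_le_iff_ne_zero.2 (Finsupp.mem_support_iff.1 hp)
  have hp1 : (1 : ℤ) ≤ p.1 := by exact_mod_cast (hU p hp).1
  have hp12 : (p.1 : ℤ) + 1 ≤ p.2 := by exact_mod_cast (hU p hp).2
  have hgap : (p.2 : ℤ) ≤ (p.2 : ℤ) ^ 2 - (p.1 : ℤ) ^ 2 := by nlinarith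
  have := mul_le_mul_of_nonneg_left hgap (show (0 : ℤ) ≤ n p by positivity)
  constructor <;> nlinarith

lemma applyRO_summand_support_finite {B : Set (ℕ × ℕ)} (hB : B ⊆ Upper) (β : ℕ → ℤ)
    {α : ℕ → ℤ} (hα : FinSupp α) :
    (Function.support fun n : (ℕ × ℕ) →₀ ℕ =>
      roCoeff Upper B n • cmon β (raiseSeq n α)).Finite := by
  obtain ⟨N, hN⟩ := hα
  set C := (∑ m ∈ range N, (m : ℤ) ^ 2 * α m).toNat
  refine ((range (C + 1) ×ˢ range (C + 1)).finsupp fun _ => range (C + 1)).finite_toSet.subset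
    fun n hn => ?_
  have hU := fun p (hp : p ∈ n.support) =>
    mem_upper_of_roCoeff_ne_zero hB (left_ne_zero_of_smul hn) hp
  have hpos : ∀ m, 0 ≤ raiseSeq n α m := fun m => not_lt.1 fun hm =>
    right_ne_zero_of_smul hn (cmon_eq_zero_of_neg β (FinSupp.raiseSeq ⟨N, hN⟩ n) hm)
  have hbound := fun p (hp : p ∈ n.support) => apply_le_and_snd_le_of_raiseSeq_nonneg hN hU hpos hp
  rw [Finset.mem_coe, mem_finsupp_iff]
  refine ⟨fun p hp => ?_, fun p _ => ?_⟩
  · have := hbound p hp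
    have := (hU p hp).2
    simp only [mem_product, mem_range]
    omega
  · by_cases hp : p ∈ n.support
    · have := hbound p hp
      simp only [mem_range]
      omega
    · simp [Finsupp.notMem_support_iff.1 hp]

lemma roCoeff_eq_mul_erase (A B : Set (ℕ × ℕ)) (n : (ℕ × ℕ) →₀ ℕ) (q : ℕ × ℕ) :
    roCoeff A B n =
      (if n q = 0 then 1 else pairCoeff (q ∈ A) (q ∈ B) (n q)) * roCoeff A B (n.erase q) := by
  by_cases hq : n q = 0
  · rw [if_pos hq, one_mul, Finsupp.erase_of_notMem_support (Finsupp.notMem_support_iff.2 hq)]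
  · rw [if_neg hq]
    exact (Finsupp.mul_prod_erase n q (fun p c => pairCoeff (p ∈ A) (p ∈ B) c)
      (Finsupp.mem_support_iff.2 hq)).symm

lemma roCoeff_congr_right (A : Set (ℕ × ℕ)) {B B' : Set (ℕ × ℕ)} {n : (ℕ × ℕ) →₀ ℕ}
    (h : ∀ p ∈ n.support, p ∈ B ↔ p ∈ B') : roCoeff A B n = roCoeff A B' n :=
  prod_congr rfl fun p hp => by simp only [h p hp]

/-- Coefficientwise at `q`, this is `(1 - R) = (1 - R)(1 + R)⁻¹ + R (1 - R)(1 + R)⁻¹`. -/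
lemma roCoeff_eq_add_of_notMem {B : Set (ℕ × ℕ)} {q : ℕ × ℕ} (hq : q ∈ Upper) (hqB : q ∉ B)
    (n : (ℕ × ℕ) →₀ ℕ) :
    roCoeff Upper B n = roCoeff Upper (B ∪ {q}) n
      + if q ∈ n.support then roCoeff Upper (B ∪ {q}) (n - Finsupp.single q 1) else 0 := by
  have hcongr : ∀ n' : (ℕ × ℕ) →₀ ℕ,
      roCoeff Upper B (n'.erase q) = roCoeff Upper (B ∪ {q}) (n'.erase q) :=
    fun n' => roCoeff_congr_right _ fun p hp => by
      have hpq : p ≠ q := by rintro rfl; exact Finsupp.mem_support_iff.1 hp Finsupp.erase_same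
      simp [hpq]
  have hqB' : q ∈ B ∪ {q} := Or.inr rfl
  rw [roCoeff_eq_mul_erase _ B n q, roCoeff_eq_mul_erase _ (B ∪ {q}) n q, hcongr]
  by_cases h0 : n q = 0
  · simp [h0, Finsupp.notMem_support_iff.2 h0]
  set n' : (ℕ × ℕ) →₀ ℕ := n - Finsupp.single q 1
  have herase : n'.erase q = n.erase q := by
    ext p
    rcases eq_or_ne p q with rfl | hpq
    · simp
    · simp [n', Finsupp.erase_ne hpq, hpq.symm]
  have hq1 : n' q = n q - 1 := by simp [n']
  rw [if_pos (Finsupp.mem_support_iff.2 h0), roCoeff_eq_mul_erase _ _ n' q, herase, hq1]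
  simp only [pairCoeff, hq, hqB, hqB', if_true, if_false, if_neg h0]
  rcases (Nat.one_le_iff_ne_zero.2 h0).eq_or_lt with h1 | h2
  · rw [← h1, if_pos le_rfl, if_pos (Nat.sub_self 1)]
    ring
  · rw [if_neg (by omega), if_neg (by omega), show n q = n q - 1 + 1 by omega, pow_succ]
    simp

lemma applyRO_update_sub_one {B : Set (ℕ × ℕ)} (hB : B ⊆ Upper) (β : ℕ → ℤ) (m : ℕ) (x : P)
    {α : ℕ → ℤ} (hα : FinSupp α)
    (hx : ∀ p, cc (β m - 1) p = cc (β m) p + x * cc (β m) (p - 1)) :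
    applyRO Upper B (Function.update β m (β m - 1)) α
      = applyRO Upper B β α + x * applyRO Upper B β (addAt α m (-1)) := by
  have hfin := applyRO_summand_support_finite hB β (hα.addAt m (-1))
  unfold applyRO
  rw [mul_finsum, ← finsum_add_distrib (applyRO_summand_support_finite hB β hα)
    (hfin.subset fun n hn => right_ne_zero_of_mul hn)]
  refine finsum_congr fun n => ?_
  beta_reduce
  rw [cmon_update_sub_one β m x (hα.raiseSeq n) (hx _), ← raiseSeq_addAt, smul_add, mul_smul_comm]

lemma applyRO_eq_add_of_notMem {B : Set (ℕ × ℕ)} (hB : B ⊆ Upper) {i j : ℕ}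
    (hij : (i, j) ∈ Upper) (hnot : (i, j) ∉ B) (β : ℕ → ℤ) {α : ℕ → ℤ} (hα : FinSupp α) :
    applyRO Upper B β α
      = applyRO Upper (B ∪ {(i, j)}) β α
        + applyRO Upper (B ∪ {(i, j)}) β (addAt (addAt α i 1) j (-1)) := by
  set α' := addAt (addAt α i 1) j (-1)
  have hB' : B ∪ {(i, j)} ⊆ Upper := Set.union_subset hB (Set.singleton_subset_iff.2 hij)
  set G := fun n : (ℕ × ℕ) →₀ ℕ => roCoeff Upper (B ∪ {(i, j)}) n • cmon β (raiseSeq n α')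
  set F := fun n : (ℕ × ℕ) →₀ ℕ => if (i, j) ∈ n.support then G (n - Finsupp.single (i, j) 1) else 0
  have hsub_add : ∀ n, (i, j) ∈ n.support →
      n - Finsupp.single (i, j) 1 + Finsupp.single (i, j) 1 = n := fun n hn =>
    tsub_add_cancel_of_le (Finsupp.single_le_iff.2
      (Nat.one_le_iff_ne_zero.2 (Finsupp.mem_support_iff.1 hn)))
  have hsummand : ∀ n, roCoeff Upper B n • cmon β (raiseSeq n α)
      = roCoeff Upper (B ∪ {(i, j)}) n • cmon β (raiseSeq n α) + F n := fun n => by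
    rw [roCoeff_eq_add_of_notMem hij hnot, add_smul]
    congr 1
    by_cases hn : (i, j) ∈ n.support
    · simp only [F, G, α', if_pos hn]
      rw [← raiseSeq_single_one, ← raiseSeq_add, hsub_add n hn]
    · simp only [F, if_neg hn, zero_smul]
  have hF_add : ∀ m, F (m + Finsupp.single (i, j) 1) = G m := fun m => by
    have hmem : (i, j) ∈ (m + Finsupp.single (i, j) 1).support := by simp
    simp only [F, if_pos hmem, add_tsub_cancel_right]
  have hF_supp : Function.support F ⊆ Set.range (· + Finsupp.single (i, j) 1) := fun n hn => by
    by_cases h : (i, j) ∈ n.support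
    · exact ⟨n - Finsupp.single (i, j) 1, hsub_add n h⟩
    · exact absurd (if_neg h) hn
  have hF_fin : (Function.support F).Finite := by
    refine ((applyRO_summand_support_finite hB' β (hα.addAt i 1 |>.addAt j (-1))).image
      (· + Finsupp.single (i, j) 1)).subset fun n hn => ?_
    obtain ⟨m, rfl⟩ := hF_supp hn
    refine ⟨m, ?_, rfl⟩
    show G m ≠ 0
    rw [← hF_add]
    exact hn
  unfold applyRO
  rw [finsum_congr hsummand, finsum_add_distrib (applyRO_summand_support_finite hB' β hα) hF_fin,
    ← finsum_mem_univ F,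
    finsum_mem_inter_support_eq' F Set.univ (Set.range (· + Finsupp.single (i, j) 1))
      fun n hn => iff_of_true trivial (hF_supp hn),
    finsum_mem_range (add_left_injective _)]
  simp only [hF_add, G]

lemma tvar_neg (r : ℤ) : tvar (-r) = tvar r := by simp [tvar]

lemma addAt_addAt_self (α : ℕ → ℤ) (m : ℕ) (a b : ℤ) :
    addAt (addAt α m a) m b = addAt α m (a + b) := by
  funext x
  simp only [addAt]
  split_ifs <;> ring

lemma addAt_comm (α : ℕ → ℤ) (m m' : ℕ) (a b : ℤ) :
    addAt (addAt α m a) m' b = addAt (addAt α m' b) m a := by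
  funext x
  simp only [addAt]
  ring

lemma addAt_zero (α : ℕ → ℤ) (m : ℕ) : addAt α m 0 = α := by
  funext x
  simp [addAt]

section Corner

variable {D : Set (ℕ × ℕ)} {i j : ℕ}

lemma aD_union_singleton_of_ne {m : ℕ} (hm : m ≠ j) : aD (D ∪ {(i, j)}) m = aD D m := by
  unfold aD
  congr 1
  ext i'
  simp [hm]

lemma aD_union_singleton_add_one (hi : i ∈ Ico 1 j) (hnot : (i, j) ∉ D) :
    aD (D ∪ {(i, j)}) j + 1 = aD D j := by
  unfold aD
  conv_rhs => rw [← card_erase_add_one (mem_filter.2 ⟨hi, hnot⟩)]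
  congr 2
  ext i'
  by_cases h : i' = i <;> simp [h, hnot]

lemma aD_eq_zero_of_mem {E : Set (ℕ × ℕ)} (hE : ValidPairs E) (hij : (i, j) ∈ E) :
    aD E i = 0 := by
  refine card_eq_zero.2 (filter_eq_empty_iff.2 fun i' hi' => not_not.2 ?_)
  obtain ⟨hi'1, hi'i⟩ := mem_Ico.1 hi'
  exact hE.2.2 (i, j) hij (i', i) ⟨hi'1, hi'i⟩ hi'i.le (hE.1 hij).2.le

lemma aD_left_eq_zero_of_outer_corner (hcorner : ValidPairs (D ∪ {(i, j)})) : aD D i = 0 := by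
  rw [← aD_union_singleton_of_ne (hcorner.1 (Or.inr rfl)).2.ne]
  exact aD_eq_zero_of_mem hcorner (Or.inr rfl)

variable (k : ℕ)

lemma gammaSeq_union_singleton (hi : i ∈ Ico 1 j) (hnot : (i, j) ∉ D) (ν : ℕ → ℤ) :
    gammaSeq k (D ∪ {(i, j)}) ν = Function.update (gammaSeq k D ν) j (gammaSeq k D ν j - 1) := by
  funext m
  rcases eq_or_ne m j with rfl | hm
  · have := aD_union_singleton_add_one hi hnot
    simp only [gammaSeq, Function.update_self]
    omega
  · simp only [gammaSeq, Function.update_of_ne hm, aD_union_singleton_of_ne hm]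

lemma gammaSeq_union_singleton_raise (hi : i ∈ Ico 1 j) (hnot : (i, j) ∉ D) (ν : ℕ → ℤ) :
    gammaSeq k (D ∪ {(i, j)}) (addAt (addAt ν i 1) j (-1))
      = Function.update (gammaSeq k D ν) i (gammaSeq k D ν i - 1) := by
  have hij : i ≠ j := (mem_Ico.1 hi).2.ne
  funext m
  rw [gammaSeq_union_singleton k hi hnot]
  rcases eq_or_ne m i with rfl | hmi
  · simp only [gammaSeq, addAt, if_true, if_neg hij, Function.update_self,
      Function.update_of_ne hij]
    ring
  · rcases eq_or_ne m j with rfl | hmj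
    · simp only [gammaSeq, addAt, if_true, if_neg hmi, Function.update_self,
        Function.update_of_ne hmi]
      ring
    · simp [gammaSeq, addAt, hmi, hmj]

end Corner

theorem Tpol_eq_add_of_outer_corner {k : ℕ} {D : Set (ℕ × ℕ)} {i j : ℕ} (hnot : (i, j) ∉ D)
    (hcorner : ValidPairs (D ∪ {(i, j)})) {ν : ℕ → ℤ} (hν : FinSupp ν) (hνi : (k : ℤ) < ν i)
    (hνj : ν j ≤ k + aD D j) :
    Tpol k D ν = Tpol k (D ∪ {(i, j)}) ν + Tpol k (D ∪ {(i, j)}) (addAt (addAt ν i 1) j (-1))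
      + (tvar (gammaSeq k D ν i - 1) - tvar (gammaSeq k D ν j)) *
          applyRO Upper (D ∪ {(i, j)}) (gammaSeq k D ν) (addAt ν j (-1)) := by
  set γ := gammaSeq k D ν
  have hijD' : (i, j) ∈ D ∪ {(i, j)} := Or.inr rfl
  have hij : (i, j) ∈ Upper := hcorner.1 hijD'
  have hi : i ∈ Ico 1 j := mem_Ico.2 hij
  have haDi := aD_left_eq_zero_of_outer_corner hcorner
  have hγi : γ i ≤ 0 := by simp only [γ, gammaSeq, haDi]; omega
  have hγj : 1 ≤ γ j := by simp only [γ, gammaSeq]; omega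
  have hsplit := applyRO_eq_add_of_notMem (Set.subset_union_left.trans hcorner.1) hij hnot γ hν
  have hlower_j := applyRO_update_sub_one hcorner.1 γ j _ hν (cc_sub_one_of_pos hγj)
  have hlower_i := applyRO_update_sub_one hcorner.1 γ i _ ((hν.addAt i 1).addAt j (-1))
    (cc_sub_one_of_nonpos hγi)
  rw [← gammaSeq_union_singleton k hi hnot] at hlower_j
  rw [← gammaSeq_union_singleton_raise k hi hnot, addAt_comm _ j i, addAt_addAt_self,
    add_neg_cancel, addAt_zero] at hlower_i
  rw [Tpol, Tpol, Tpol, hsplit, hlower_j, hlower_i]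
  ring

theorem stmt2_general (k : ℕ) (D : Set (ℕ × ℕ)) (i j : ℕ)
    (hnot : (i, j) ∉ D) (hcorner : ValidPairs (D ∪ {(i, j)}))
    (μ : ℕ → ℤ) (hfin : FinSupp μ)
    (hμi : (k : ℤ) < μ i) (hμj : μ j ≤ (k : ℤ)) (r : ℤ) (hr : r ≤ 1) :
    (Tpol k D (addAt μ j r) =
        Tpol k (D ∪ {(i, j)}) (addAt μ j r)
          + Tpol k (D ∪ {(i, j)}) (addAt (addAt μ i 1) j (r - 1))
          + (tvar (gammaSeq k D (addAt μ j r) i - 1) - tvar (gammaSeq k D (addAt μ j r) j)) *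
              applyRO Upper (D ∪ {(i, j)}) (gammaSeq k D (addAt μ j r)) (addAt μ j (r - 1))) ∧
    (μ i + μ j + r = 2 * (k : ℤ) + 1 + (aD D j : ℤ) →
      Tpol k D (addAt μ j r) =
        Tpol k (D ∪ {(i, j)}) (addAt μ j r)
          + Tpol k (D ∪ {(i, j)}) (addAt (addAt μ i 1) j (r - 1))) := by
  have hij : i < j := (hcorner.1 (Or.inr rfl)).2
  have haDj := aD_union_singleton_add_one (mem_Ico.2 ⟨(hcorner.1 (Or.inr rfl)).1, hij⟩) hnot
  have hνi : addAt μ j r i = μ i := by simp [addAt, hij.ne]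
  have hνj : addAt μ j r j = μ j + r := by simp [addAt]
  have hcorner_step := Tpol_eq_add_of_outer_corner hnot hcorner (hfin.addAt j r)
    (by rw [hνi]; exact hμi) (by rw [hνj]; omega)
  rw [addAt_comm _ j i, addAt_addAt_self, addAt_addAt_self, ← sub_eq_add_neg] at hcorner_step
  refine ⟨hcorner_step, fun hsum => ?_⟩
  have ht : tvar (gammaSeq k D (addAt μ j r) i - 1) = tvar (gammaSeq k D (addAt μ j r) j) := by
    rw [← tvar_neg]
    congr 1
    simp only [gammaSeq, hνi, hνj, aD_left_eq_zero_of_outer_corner hcorner]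
    omega
  rw [hcorner_step, ht, sub_self, zero_mul, add_zero]

theorem stmt2 (k : ℕ) (D : Set (ℕ × ℕ)) (hD : ValidPairs D) (i j : ℕ)
    (hnot : (i, j) ∉ D) (hcorner : ValidPairs (D ∪ {(i, j)}))
    (μ : ℕ → ℤ) (hμ0 : μ 0 = 0) (hfin : FinSupp μ)
    (hμi : (k : ℤ) < μ i) (hμj : μ j ≤ (k : ℤ)) (r : ℤ) (hr : r ≤ 1) :
    (Tpol k D (addAt μ j r) =
        Tpol k (D ∪ {(i, j)}) (addAt μ j r)
          + Tpol k (D ∪ {(i, j)}) (addAt (addAt μ i 1) j (r - 1))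
          + (tvar (gammaSeq k D (addAt μ j r) i - 1) - tvar (gammaSeq k D (addAt μ j r) j)) *
              applyRO Upper (D ∪ {(i, j)}) (gammaSeq k D (addAt μ j r)) (addAt μ j (r - 1))) ∧
    (μ i + μ j + r = 2 * (k : ℤ) + 1 + (aD D j : ℤ) →
      Tpol k D (addAt μ j r) =
        Tpol k (D ∪ {(i, j)}) (addAt μ j r)
          + Tpol k (D ∪ {(i, j)}) (addAt (addAt μ i 1) j (r - 1))) :=
  stmt2_general k D i j hnot hcorner μ hfin hμi hμj r hr

end
end

section
/- Let λ be a k-strict partition of length ℓ, let ℓ_k := #{i : λ_i > k}, and let C := {(i,j) : 1 ≤ i < j ≤ ℓ, λ_i + λ_j > 2k + j − i}. For 1 ≤ h ≤ ℓ_k + 1 define b_h := min{ j > ℓ_k : (h,j) ∉ C } and g_h := b_{h−1}, with the convention g_1 := ℓ + 1. Then for all 2 ≤ h ≤ ℓ_k + 1 one has λ_{h−1} − λ_h ≥ g_h − b_h + 1. -/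
open scoped Classical

noncomputable section

/-! Let d = λ_{h-1} - λ_h, which is ≥ 1 because row h-1 is among the first ℓ_k rows. Then
b_h + d - 1 is a candidate for b_{h-1}: if (h-1, b_h + d - 1) were in C, then, λ being weakly
decreasing, so would be (h, b_h), or, in the boundary case b_h = h = ℓ_k + 1, λ_h would exceed k. -/

theorem IsPartition.antitoneOn {lam : ℕ → ℤ} (hlam : IsPartition lam) :
    AntitoneOn lam (Set.Ici 1) :=
  antitoneOn_nat_Ici_of_succ_le fun n hn => hlam.2.2.1 n hn

/-- b_h is the minimum of this set. -/
def nonCSet (k : ℕ) (lam : ℕ → ℤ) (ℓ ℓk h : ℕ) : Set ℕ :=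
  {j | ℓk < j ∧ (h, j) ∉ Cset k lam ∩ {p | p.2 ≤ ℓ}}

theorem nonCSet_nonempty (k : ℕ) (lam : ℕ → ℤ) (ℓ ℓk h : ℕ) :
    (nonCSet k lam ℓ ℓk h).Nonempty :=
  ⟨ℓk + ℓ + 1, by omega, fun hC => by have : ℓk + ℓ + 1 ≤ ℓ := hC.2; omega⟩

theorem lt_add_of_mem_Cset_shift {k : ℕ} {lam : ℕ → ℤ} (hlam : IsPartition lam) {i j m : ℕ}
    (hij : i + 1 ≤ j) (hjm : j ≤ m) (hm : (m : ℤ) = j + (lam i - lam (i + 1)) - 1)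
    (hC : (i, m) ∈ Cset k lam) : 2 * (k : ℤ) + j - (i + 1 : ℕ) < lam (i + 1) + lam j := by
  have hmj : lam m ≤ lam j :=
    hlam.antitoneOn (Set.mem_Ici.2 (by omega)) (Set.mem_Ici.2 (by omega)) hjm
  have hineq := hC.2.2
  push_cast at hineq ⊢
  omega

theorem mem_nonCSet_shift {k : ℕ} {lam : ℕ → ℤ} (hlam : IsKStrict k lam) {ℓ ℓk i j : ℕ}
    (hlk : ∀ i, 1 ≤ i → ((k : ℤ) < lam i ↔ i ≤ ℓk)) (hi : 1 ≤ i) (hiℓk : i ≤ ℓk)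
    (hj : j ∈ nonCSet k lam ℓ ℓk (i + 1)) :
    j + (lam i - lam (i + 1) - 1).toNat ∈ nonCSet k lam ℓ ℓk i := by
  obtain ⟨hℓkj, hjC⟩ := hj
  have hdrop : lam (i + 1) < lam i := hlam.2 i hi ((hlk i hi).2 hiℓk)
  set m := j + (lam i - lam (i + 1) - 1).toNat
  have hm : (m : ℤ) = j + (lam i - lam (i + 1)) - 1 := by
    simp only [m, Nat.cast_add, Int.toNat_of_nonneg (by omega : 0 ≤ lam i - lam (i + 1) - 1)]
    ring
  refine ⟨by omega, fun ⟨hC, hmℓ⟩ => ?_⟩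
  have hmℓ : m ≤ ℓ := hmℓ
  have key := lt_add_of_mem_Cset_shift hlam.1 (by omega) (Nat.le_add_right _ _) hm hC
  rcases Nat.lt_or_ge (i + 1) j with hij | hji
  · exact hjC ⟨⟨by omega, hij, key⟩, show j ≤ ℓ by omega⟩
  · -- here `j = i + 1 = ℓk + 1`, so `key` reads `k < λ_{ℓk+1}`
    have hj : j = i + 1 := by omega
    subst hj
    have := (hlk (i + 1) (by omega)).1 (by push_cast at key; omega)
    omega

theorem stmt9_general (k : ℕ) (lam : ℕ → ℤ) (hlam : IsKStrict k lam) (ℓ ℓk : ℕ)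
    (hlk : ∀ i, 1 ≤ i → ((k : ℤ) < lam i ↔ i ≤ ℓk))
    (b : ℕ → ℕ)
    (hb : ∀ h, b h = sInf {j : ℕ | ℓk < j ∧ (h, j) ∉ Cset k lam ∩ {p | p.2 ≤ ℓ}}) :
    ∀ h, 2 ≤ h → h ≤ ℓk + 1 → (b (h-1) : ℤ) - (b h : ℤ) + 1 ≤ lam (h-1) - lam h := by
  intro h h2 hh
  obtain ⟨i, rfl⟩ : ∃ i, h = i + 1 := ⟨h - 1, by omega⟩
  rw [Nat.add_sub_cancel]
  have hdrop : lam (i + 1) < lam i := hlam.2 i (by omega) ((hlk i (by omega)).2 (by omega))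
  have hbmem : b (i + 1) ∈ nonCSet k lam ℓ ℓk (i + 1) :=
    hb (i + 1) ▸ Nat.sInf_mem (nonCSet_nonempty k lam ℓ ℓk (i + 1))
  have hbi : b i ≤ b (i + 1) + (lam i - lam (i + 1) - 1).toNat :=
    hb i ▸ Nat.sInf_le (mem_nonCSet_shift hlam hlk (by omega) (by omega) hbmem)
  have := Int.toNat_of_nonneg (by omega : 0 ≤ lam i - lam (i + 1) - 1)
  omega

theorem stmt9 (k : ℕ) (lam : ℕ → ℤ) (hlam : IsKStrict k lam) (ℓ ℓk : ℕ)
    (hlen : ∀ i, 1 ≤ i → (lam i ≠ 0 ↔ i ≤ ℓ))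
    (hlk : ∀ i, 1 ≤ i → ((k : ℤ) < lam i ↔ i ≤ ℓk))
    (b : ℕ → ℕ)
    (hb : ∀ h, b h = sInf {j : ℕ | ℓk < j ∧ (h, j) ∉ Cset k lam ∩ {p | p.2 ≤ ℓ}}) :
    ∀ h, 2 ≤ h → h ≤ ℓk + 1 → (b (h-1) : ℤ) - (b h : ℤ) + 1 ≤ lam (h-1) - lam h :=
  stmt9_general k lam hlam ℓ ℓk hlk b hb
end
end
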